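/- arXiv:2210.03503 — 5 statements merged into one kernel-verified Lean document; each statement's English description precedes it below -/
import Mathlib

section
/- Let n ≥ 2 be an integer and let f be a continuous, not identically zero, positive definite function on ℝ that is n-divisible. Assume that the essential support S_f = {x ∈ ℝ : f(x) ≠ 0} has exactly 2k−1 connected components for some positive integer k. Then the set D_n(f) = {g : g is continuous, not identically zero, positive definite on ℝ и g(x)^n = f(x) for all x ∈ ℝ} has cardinality at most n^(k−1). -/
open Complex MeasureTheory Set Pointwise ComplexOrder

noncomputable section

/-- `f : ℝ → ℂ` is positive definite. -/
def IsPosDefFn (f : ℝ → ℂ) : Prop :=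
  ∀ (m : ℕ) (x : Fin m → ℝ) (c : Fin m → ℂ),
    0 ≤ ∑ j, ∑ k, f (x j - x k) * c j * (starRingEnd ℂ) (c k)

/-- `f ∈ PD(ℝ)`: continuous, not identically zero, positive definite. -/
def MemPD (f : ℝ → ℂ) : Prop :=
  Continuous f ∧ (∃ x, f x ≠ 0) ∧ IsPosDefFn f

/-- The essential support `S_f`. -/
def essSupp (f : ℝ → ℂ) : Set ℝ := {x | f x ≠ 0}

/-- `D_n(f) = {g ∈ PD(ℝ) : g^n = f}`. -/
def Dset (n : ℕ) (f : ℝ → ℂ) : Set (ℝ → ℂ) :=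
  {g | MemPD g ∧ ∀ x, g x ^ n = f x}

/-- The set of connected components of `S ⊆ ℝ`. -/
def comps (S : Set ℝ) : Set (Set ℝ) :=
  {C | ∃ x ∈ S, C = connectedComponentIn S x}

/-! Two continuous `n`-th roots of `f` differ on each connected component of `S_f` by a continuous
factor with values among the `n`-th roots of unity, hence by a constant. Positive definiteness
gives `g (-x) = conj (g x)` and `g 0 ≥ 0`. So `S_f` is symmetric: negation swaps its components in
`(0, ∞)` with those in `(-∞, 0)`, and the remaining one contains `0`; hence `k - 1` of them lie in
`(0, ∞)`. All roots agree on the component of `0`, and a root is determined by its values at one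
point of each component in `(0, ∞)`, leaving at most `n ^ (k - 1)` choices. -/

namespace IsPosDefFn

variable {f g : ℝ → ℂ}

lemma map_zero_nonneg (hf : IsPosDefFn f) : 0 ≤ f 0 := by
  simpa using hf 1 (fun _ => 0) (fun _ => 1)

lemma map_neg (hf : IsPosDefFn f) (x : ℝ) : f (-x) = starRingEnd ℂ (f x) := by
  have h0 := (Complex.nonneg_iff.mp hf.map_zero_nonneg).2
  have h1 := Complex.nonneg_iff.mp (hf 2 ![x, 0] ![1, 1])
  have h2 := Complex.nonneg_iff.mp (hf 2 ![x, 0] ![1, I])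
  simp only [Fin.sum_univ_two, Fin.isValue, Matrix.cons_val_zero, map_one, mul_one,
    Matrix.cons_val_one, Matrix.cons_val_fin_one, sub_zero, sub_self, zero_sub, add_re, add_im,
    conj_I, mul_neg, neg_re, mul_re, I_re, mul_zero, I_im, neg_neg, mul_im, add_zero, neg_im] at h1 h2
  apply Complex.ext <;> simp only [conj_re, conj_im] <;> linarith [h1.2, h2.2]

lemma eq_zero_of_map_zero (hf : IsPosDefFn f) (h0 : f 0 = 0) (x : ℝ) : f x = 0 := by
  have key := Complex.nonneg_iff.mp (hf 2 ![x, 0] ![1, -f x])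
  simp only [Fin.sum_univ_two, Fin.isValue, Matrix.cons_val_zero, map_one, mul_one,
    Matrix.cons_val_one, Matrix.cons_val_fin_one, sub_zero, _root_.map_neg, mul_neg, sub_self, h0,
    zero_add, zero_sub, hf.map_neg, zero_mul, neg_zero, add_zero, add_re, neg_re, mul_re, conj_re,
    conj_im, sub_neg_eq_add, neg_add_rev, neg_mul, nonneg_add_self_iff, le_add_neg_iff_add_le,
    add_im, neg_im, mul_im, neg_neg] at key
  apply Complex.ext <;> simp only [zero_re, zero_im] <;> nlinarith [key.1, sq_nonneg (f x).re, sq_nonneg (f x).im]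

lemma neg_essSupp (hf : IsPosDefFn f) : -essSupp f = essSupp f := by
  ext x
  simp [essSupp, hf.map_neg x, -neg_neg]

lemma map_zero_eq_of_pow_eq (hf : IsPosDefFn f) (hg : IsPosDefFn g) {n : ℕ} (hn : n ≠ 0)
    (h : f 0 ^ n = g 0 ^ n) : f 0 = g 0 := by
  obtain ⟨a, ha, hfa⟩ := RCLike.nonneg_iff_exists_ofReal.mp hf.map_zero_nonneg
  obtain ⟨b, hb, hgb⟩ := RCLike.nonneg_iff_exists_ofReal.mp hg.map_zero_nonneg
  rw [← hfa, ← hgb] at h ⊢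
  exact_mod_cast (pow_left_inj₀ ha hb hn).mp (by exact_mod_cast h)

lemma eq_of_eqOn_Ioi (hf : IsPosDefFn f) (hg : IsPosDefFn g) (h0 : f 0 = g 0)
    (h : EqOn f g (Ioi 0)) : f = g := by
  funext x
  rcases lt_trichotomy x 0 with hx | rfl | hx
  · rw [← neg_neg x, hf.map_neg, hg.map_neg, h (neg_pos.mpr hx)]
  · exact h0
  · exact h hx

end IsPosDefFn

lemma MemPD.map_zero_ne_zero {f : ℝ → ℂ} (hf : MemPD f) : f 0 ≠ 0 := fun h0 =>
  let ⟨x, hx⟩ := hf.2.1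
  hx (hf.2.2.eq_zero_of_map_zero h0 x)

lemma Polynomial.card_nthRootsFinset_le {R : Type*} [CommRing R] [IsDomain R] (n : ℕ) (a : R) :
    (nthRootsFinset n a).card ≤ n := by
  classical
  rw [nthRootsFinset_def]
  exact (Multiset.toFinset_card_le _).trans (card_nthRoots n a)

lemma IsPreconnected.eqOn_of_pow_eq {X 𝕜 : Type*} [TopologicalSpace X] [NormedField 𝕜]
    {C : Set X} (hC : IsPreconnected C) {n : ℕ} (hn : n ≠ 0) {g h : X → 𝕜}
    (hg : ContinuousOn g C) (hh : ContinuousOn h C) (hpow : ∀ y ∈ C, g y ^ n = h y ^ n)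
    (hne : ∀ y ∈ C, h y ≠ 0) {x : X} (hx : x ∈ C) (hgh : g x = h x) : EqOn g h C := by
  have hquot_fin : ((fun y => g y / h y) '' C).Finite := by
    refine (Polynomial.nthRootsFinset n (1 : 𝕜)).finite_toSet.subset ?_
    rintro - ⟨y, hy, rfl⟩
    rw [Finset.mem_coe, Polynomial.mem_nthRootsFinset (Nat.pos_of_ne_zero hn), div_pow,
      hpow y hy, div_self (pow_ne_zero n (hne y hy))]
  have hquot_sub : ((fun y => g y / h y) '' C).Subsingleton :=
    not_nontrivial_iff.mp fun hnt => ((hC.image _ (hg.div hh hne)).infinite_of_nontrivial hnt)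
      hquot_fin
  intro y hy
  have := hquot_sub (mem_image_of_mem _ hy) (mem_image_of_mem _ hx)
  rwa [hgh, div_self (hne x hx), div_eq_one_iff_eq (hne y hy)] at this

lemma neg_connectedComponentIn {G : Type*} [TopologicalSpace G] [InvolutiveNeg G]
    [ContinuousNeg G] {S : Set G} (hS : -S = S) {x : G} (hx : x ∈ S) :
    -connectedComponentIn S x = connectedComponentIn S (-x) := by
  simpa [image_neg_eq_neg, hS] using (Homeomorph.neg G).image_connectedComponentIn hx

lemma neg_mem_comps {S : Set ℝ} (hS : -S = S) {C : Set ℝ} (hC : C ∈ comps S) : -C ∈ comps S := by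
  obtain ⟨x, hx, rfl⟩ := hC
  exact ⟨-x, hS ▸ neg_mem_neg.mpr hx, neg_connectedComponentIn hS hx⟩

lemma nonempty_of_mem_comps {S C : Set ℝ} (hC : C ∈ comps S) : C.Nonempty := by
  obtain ⟨x, hx, rfl⟩ := hC
  exact ⟨x, mem_connectedComponentIn hx⟩

lemma connectedComponentIn_subset_Ioi {S : Set ℝ} {a x : ℝ} (hx : x ∈ S) (hax : a < x)
    (ha : a ∉ connectedComponentIn S x) : connectedComponentIn S x ⊆ Ioi a := fun _ ht =>
  lt_of_not_ge fun hta => ha <| isPreconnected_connectedComponentIn.ordConnected.out ht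
    (mem_connectedComponentIn hx) ⟨hta, hax.le⟩

def posComps (S : Set ℝ) : Set (Set ℝ) := {C ∈ comps S | C ⊆ Ioi 0}

lemma comps_eq_insert_posComps {S : Set ℝ} (hS : -S = S) (h0 : 0 ∈ S) :
    comps S = insert (connectedComponentIn S 0) (posComps S ∪ -posComps S) := by
  ext C
  constructor
  · rintro ⟨x, hx, rfl⟩
    by_cases h0C : (0 : ℝ) ∈ connectedComponentIn S x
    · exact .inl (connectedComponentIn_eq h0C)
    rcases lt_or_gt_of_ne (ne_of_mem_of_not_mem (mem_connectedComponentIn hx) h0C) with hneg | hpos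
    · refine .inr (.inr ⟨neg_mem_comps hS ⟨x, hx, rfl⟩, ?_⟩)
      have h0C' : (0 : ℝ) ∉ -connectedComponentIn S x := by simpa using h0C
      rw [neg_connectedComponentIn hS hx] at h0C' ⊢
      exact connectedComponentIn_subset_Ioi (hS ▸ neg_mem_neg.mpr hx) (neg_pos.mpr hneg) h0C'
    · exact .inr (.inl ⟨⟨x, hx, rfl⟩, connectedComponentIn_subset_Ioi hx hpos h0C⟩)
  · rintro (rfl | hC | hC)
    · exact ⟨0, h0, rfl⟩
    · exact hC.1
    · simpa using neg_mem_comps hS hC.1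

lemma ncard_comps_eq {S : Set ℝ} (hS : -S = S) (h0 : 0 ∈ S) (hfin : (comps S).Finite) :
    (comps S).ncard = 2 * (posComps S).ncard + 1 := by
  have hP : (posComps S).Finite := hfin.subset (sep_subset _ _)
  have hdisj : Disjoint (posComps S) (-posComps S) := by
    refine disjoint_left.mpr ?_
    rintro C ⟨⟨x, hx, rfl⟩, hpos⟩ ⟨-, hneg⟩
    have hxC := mem_connectedComponentIn hx
    exact lt_asymm (mem_Ioi.mp (hpos hxC)) (neg_pos.mp (mem_Ioi.mp (hneg (neg_mem_neg.mpr hxC))))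
  have hC₀ : connectedComponentIn S 0 ∉ posComps S ∪ -posComps S := by
    have h0C := mem_connectedComponentIn h0
    rintro (⟨-, hpos⟩ | ⟨-, hneg⟩)
    · exact lt_irrefl 0 (mem_Ioi.mp (hpos h0C))
    · simpa using hneg (neg_mem_neg.mpr h0C)
  rw [comps_eq_insert_posComps hS h0, ncard_insert_of_notMem hC₀ (hP.union hP.neg),
    ncard_union_eq hdisj hP hP.neg, ncard_neg]
  ring

namespace Dset

variable {n : ℕ} {f g g' : ℝ → ℂ}

lemma apply_ne_zero_iff (hn : n ≠ 0) (hg : g ∈ Dset n f) {x : ℝ} : g x ≠ 0 ↔ x ∈ essSupp f := by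
  simp [essSupp, ← hg.2 x, hn]

lemma eqOn_connectedComponentIn (hn : n ≠ 0) (hg : g ∈ Dset n f) (hg' : g' ∈ Dset n f) {x : ℝ}
    (hx : x ∈ essSupp f) (hxy : g x = g' x) :
    EqOn g g' (connectedComponentIn (essSupp f) x) :=
  isPreconnected_connectedComponentIn.eqOn_of_pow_eq hn hg.1.1.continuousOn
    hg'.1.1.continuousOn (fun y _ => by rw [hg.2, hg'.2])
    (fun _ hy => (apply_ne_zero_iff hn hg').mpr (connectedComponentIn_subset _ _ hy))
    (mem_connectedComponentIn hx) hxy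

lemma eq_of_forall_posComps (hn : n ≠ 0) (hg : g ∈ Dset n f) (hg' : g' ∈ Dset n f)
    (h : ∀ C ∈ posComps (essSupp f), ∃ x ∈ C, g x = g' x) : g = g' := by
  have h0 : g 0 = g' 0 :=
    hg.1.2.2.map_zero_eq_of_pow_eq hg'.1.2.2 hn (by rw [hg.2, hg'.2])
  refine hg.1.2.2.eq_of_eqOn_Ioi hg'.1.2.2 h0 fun x hx => ?_
  by_cases hxS : x ∈ essSupp f
  swap
  · have hgx : g x = 0 := of_not_not fun h => hxS ((apply_ne_zero_iff hn hg).mp h)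
    have hg'x : g' x = 0 := of_not_not fun h => hxS ((apply_ne_zero_iff hn hg').mp h)
    rw [hgx, hg'x]
  by_cases h0C : (0 : ℝ) ∈ connectedComponentIn (essSupp f) x
  · have hx0 : x ∈ connectedComponentIn (essSupp f) 0 :=
      connectedComponentIn_eq h0C ▸ mem_connectedComponentIn hxS
    exact eqOn_connectedComponentIn hn hg hg' (connectedComponentIn_subset _ _ h0C) h0 hx0
  · obtain ⟨y, hy, hgy⟩ := h _ ⟨⟨x, hxS, rfl⟩, connectedComponentIn_subset_Ioi hxS hx h0C⟩
    have hxy : x ∈ connectedComponentIn (essSupp f) y :=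
      connectedComponentIn_eq hy ▸ mem_connectedComponentIn hxS
    exact eqOn_connectedComponentIn hn hg hg' (connectedComponentIn_subset _ _ hy) hgy hxy

end Dset

lemma Set.finite_and_ncard_le_pow_of_injOn {α ι β : Type*} [Finite ι] {D : Set α}
    {T : ι → Finset β} {m : ℕ} (hT : ∀ i, (T i).card ≤ m) {Φ : α → ι → β}
    (hmaps : ∀ a ∈ D, ∀ i, Φ a i ∈ T i) (hΦ : InjOn Φ D) :
    D.Finite ∧ D.ncard ≤ m ^ Nat.card ι := by
  classical
  cases nonempty_fintype ι
  have hmaps' : MapsTo Φ D (Fintype.piFinset T) := fun a ha =>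
    Fintype.mem_piFinset.mpr (hmaps a ha)
  refine ⟨Finite.of_injOn hmaps' hΦ (Finset.finite_toSet _), ?_⟩
  calc D.ncard ≤ (Fintype.piFinset T : Set (ι → β)).ncard := ncard_le_ncard_of_injOn Φ hmaps' hΦ
    _ = ∏ i, (T i).card := by rw [ncard_coe_finset, Fintype.card_piFinset]
    _ ≤ m ^ Nat.card ι := by
      rw [Nat.card_eq_fintype_card, ← Finset.card_univ]
      exact Finset.prod_le_pow_card _ _ _ fun i _ => hT i

theorem card_Dset_le_of_odd_components_general (n k : ℕ) (hn : 2 ≤ n) (hk : 0 < k)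
    (f : ℝ → ℂ) (hf : MemPD f)
    (hcomp : (comps (essSupp f)).ncard = 2 * k - 1) :
    (Dset n f).Finite ∧ (Dset n f).ncard ≤ n ^ (k - 1) := by
  have hn0 : n ≠ 0 := by omega
  have hfin : (comps (essSupp f)).Finite := finite_of_ncard_pos (by omega)
  have hpos : (posComps (essSupp f)).ncard = k - 1 := by
    have := ncard_comps_eq hf.2.2.neg_essSupp hf.map_zero_ne_zero hfin
    omega
  have : Finite (posComps (essSupp f)) := (hfin.subset (sep_subset _ _)).to_subtype
  choose pt hpt using fun C : posComps (essSupp f) => nonempty_of_mem_comps C.2.1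
  rw [← hpos, ← Nat.card_coe_set_eq]
  refine finite_and_ncard_le_pow_of_injOn (T := fun C => Polynomial.nthRootsFinset n (f (pt C)))
    (fun _ => Polynomial.card_nthRootsFinset_le n _) (Φ := fun g C => g (pt C)) ?_ ?_
  · intro g hg C
    simpa [Polynomial.mem_nthRootsFinset (Nat.pos_of_ne_zero hn0)] using hg.2 (pt C)
  · intro g hg g' hg' hgg'
    exact Dset.eq_of_forall_posComps hn0 hg hg' fun C hC =>
      ⟨pt ⟨C, hC⟩, hpt ⟨C, hC⟩, congrFun hgg' ⟨C, hC⟩⟩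

theorem card_Dset_le_of_odd_components (n k : ℕ) (hn : 2 ≤ n) (hk : 0 < k)
    (f : ℝ → ℂ) (hf : MemPD f) (hdiv : (Dset n f).Nonempty)
    (hcomp : (comps (essSupp f)).ncard = 2 * k - 1) :
    (Dset n f).Finite ∧ (Dset n f).ncard ≤ n ^ (k - 1) :=
  card_Dset_le_of_odd_components_general n k hn hk f hf hcomp
end
end

section
/- Let n ≥ 2 be an integer, let f be a continuous, not identically zero, positive definite function on ℝ, and let g₁, g₂ be continuous, not identically zero, positive definite functions on ℝ with g₁(x)^n = f(x) and g₂(x)^n = f(x) for all x ∈ ℝ. Then for every connected component E of S_f there exists an integer m with 0 ≤ m ≤ n−1 such that g₂(x) = e^{2πim/n} · g₁(x) for all x ∈ E. -/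
open Complex MeasureTheory Set Pointwise ComplexOrder

noncomputable section

/-!
Where `f ≠ 0`, the ratio `g₂ / g₁` is continuous and takes values among the finitely many `n`-th
roots of unity, so it is constant on each connected component of `S_f`.
-/

theorem IsPreconnected.constant_of_pow_eq_one {X K : Type*} [TopologicalSpace X]
    [CommRing K] [IsDomain K] [TopologicalSpace K] [T1Space K] {s : Set X} (hs : IsPreconnected s)
    {n : ℕ} (hn : n ≠ 0) {r : X → K} (hr : ContinuousOn r s) (hr_pow : ∀ x ∈ s, r x ^ n = 1)
    {x y : X} (hx : x ∈ s) (hy : y ∈ s) : r x = r y := by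
  have hfin : {z : K | z ^ n = 1}.Finite :=
    (Polynomial.nthRoots n (1 : K)).finite_toSet.subset fun z hz =>
      (Polynomial.mem_nthRoots (Nat.pos_of_ne_zero hn)).mpr hz
  exact hs.constant_of_mapsTo hfin.isDiscrete hr hr_pow hx hy

theorem IsPreconnected.exists_pow_eq_one_mul_of_pow_eq_pow {X K : Type*} [TopologicalSpace X]
    [Field K] [TopologicalSpace K] [IsTopologicalDivisionRing K] [T1Space K] {s : Set X}
    (hs : IsPreconnected s) {n : ℕ} (hn : n ≠ 0) {g₁ g₂ : X → K} (hg₁ : ContinuousOn g₁ s)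
    (hg₂ : ContinuousOn g₂ s) (hg₁_ne : ∀ x ∈ s, g₁ x ≠ 0) (hpow : ∀ x ∈ s, g₁ x ^ n = g₂ x ^ n) :
    ∃ ζ : K, ζ ^ n = 1 ∧ ∀ x ∈ s, g₂ x = ζ * g₁ x := by
  rcases s.eq_empty_or_nonempty with rfl | ⟨x₀, hx₀⟩
  · exact ⟨1, one_pow n, fun x hx => hx.elim⟩
  have hratio_pow : ∀ x ∈ s, (g₂ x / g₁ x) ^ n = 1 := fun x hx => by
    rw [div_pow, ← hpow x hx, div_self (pow_ne_zero n (hg₁_ne x hx))]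
  refine ⟨g₂ x₀ / g₁ x₀, hratio_pow x₀ hx₀, fun x hx => ?_⟩
  rw [← hs.constant_of_pow_eq_one hn (r := fun x => g₂ x / g₁ x)
    (hg₂.div hg₁ hg₁_ne) hratio_pow hx hx₀, div_mul_cancel₀ _ (hg₁_ne x hx)]

theorem Complex.exists_lt_exp_eq_of_pow_eq_one {n : ℕ} [NeZero n] {ζ : ℂ} (hζ : ζ ^ n = 1) :
    ∃ m < n, exp (2 * Real.pi * I * m / n) = ζ := by
  obtain ⟨m, hm, rfl⟩ := (isPrimitiveRoot_exp n (NeZero.ne n)).eq_pow_of_pow_eq_one hζ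
  refine ⟨m, hm, ?_⟩
  rw [← exp_nat_mul]
  ring_nf

theorem roots_differ_by_unit_root_on_components_general (n : ℕ) (hn : 2 ≤ n)
    (f g₁ g₂ : ℝ → ℂ) (hg₁ : MemPD g₁) (hg₂ : MemPD g₂)
    (h₁ : ∀ x, g₁ x ^ n = f x) (h₂ : ∀ x, g₂ x ^ n = f x) :
    ∀ E ∈ comps (essSupp f), ∃ m : ℕ, m ≤ n - 1 ∧
      ∀ x ∈ E, g₂ x = Complex.exp (2 * Real.pi * Complex.I * (m : ℂ) / (n : ℂ)) * g₁ x := by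
  rintro E ⟨x₀, hx₀, rfl⟩
  have hn0 : n ≠ 0 := by omega
  have : NeZero n := ⟨hn0⟩
  have hg₁_ne : ∀ x ∈ connectedComponentIn (essSupp f) x₀, g₁ x ≠ 0 := fun x hx hg₁x =>
    connectedComponentIn_subset _ _ hx (by rw [← h₁ x, hg₁x, zero_pow hn0])
  obtain ⟨ζ, hζ, hg₂_eq⟩ :=
    isPreconnected_connectedComponentIn.exists_pow_eq_one_mul_of_pow_eq_pow hn0
      hg₁.1.continuousOn hg₂.1.continuousOn hg₁_ne fun x _ => (h₁ x).trans (h₂ x).symm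
  obtain ⟨m, hm, rfl⟩ := exists_lt_exp_eq_of_pow_eq_one hζ
  exact ⟨m, by omega, hg₂_eq⟩

theorem roots_differ_by_unit_root_on_components (n : ℕ) (hn : 2 ≤ n)
    (f g₁ g₂ : ℝ → ℂ) (hf : MemPD f) (hg₁ : MemPD g₁) (hg₂ : MemPD g₂)
    (h₁ : ∀ x, g₁ x ^ n = f x) (h₂ : ∀ x, g₂ x ^ n = f x) :
    ∀ E ∈ comps (essSupp f), ∃ m : ℕ, m ≤ n - 1 ∧
      ∀ x ∈ E, g₂ x = Complex.exp (2 * Real.pi * Complex.I * (m : ℂ) / (n : ℂ)) * g₁ x :=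
  roots_differ_by_unit_root_on_components_general n hn f g₁ g₂ hg₁ hg₂ h₁ h₂
end
end

section
/- Let n ≥ 2 be an integer, let f be a continuous, not identically zero, positive definite function on ℝ, and let g₁, g₂ be continuous, not identically zero, positive definite functions on ℝ with g₁(x)^n = f(x) and g₂(x)^n = f(x) for all x ∈ ℝ. Then g₁(x) = g₂(x) for every x in the connected component of S_f that contains 0. -/
open Complex MeasureTheory Set Pointwise ComplexOrder

noncomputable section

/-!
Both `g₁ 0` and `g₂ 0` are nonnegative reals (a positive definite function is nonnegative at the
origin) with the same `n`-th power, so they agree. Off the zero set of `f = gᵢ ^ n` the ratio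
`g₁ / g₂` is continuous with values in the finite set of `n`-th roots of unity, hence constant on
the connected component of `0`, where it equals `1`.
-/

lemma IsPosDefFn.zero_nonneg {f : ℝ → ℂ} (hf : IsPosDefFn f) : 0 ≤ f 0 := by
  simpa using hf 1 ![0] ![1]

lemma RCLike.eq_of_pow_eq_of_nonneg {K : Type*} [RCLike K] {a b : K} (ha : 0 ≤ a) (hb : 0 ≤ b)
    {n : ℕ} (hn : n ≠ 0) (hab : a ^ n = b ^ n) : a = b := by
  obtain ⟨r, hr, rfl⟩ := RCLike.nonneg_iff_exists_ofReal.mp ha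
  obtain ⟨s, hs, rfl⟩ := RCLike.nonneg_iff_exists_ofReal.mp hb
  rw [← RCLike.ofReal_pow, ← RCLike.ofReal_pow, RCLike.ofReal_inj, pow_left_inj₀ hr hs hn] at hab
  rw [hab]

lemma IsPreconnected.eqOn_of_pow_eq_s9 {X 𝕜 : Type*} [TopologicalSpace X] [NormedField 𝕜]
    {s : Set X} (hs : IsPreconnected s) {u v : X → 𝕜} (hu : ContinuousOn u s)
    (hv : ContinuousOn v s) (hv₀ : ∀ x ∈ s, v x ≠ 0) {n : ℕ} (hn : n ≠ 0)
    (huv : ∀ x ∈ s, u x ^ n = v x ^ n) {a : X} (ha : a ∈ s) (hua : u a = v a) :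
    EqOn u v s := by
  have hroots : MapsTo (fun x ↦ u x / v x) s (Polynomial.nthRootsFinset n (1 : 𝕜)) := by
    intro x hx
    rw [Finset.mem_coe, Polynomial.mem_nthRootsFinset (Nat.pos_of_ne_zero hn), div_pow,
      huv x hx, div_self (pow_ne_zero n (hv₀ x hx))]
  intro x hx
  have hconst := hs.constant_of_mapsTo (Finset.finite_toSet _).isDiscrete
    (hu.div hv hv₀) hroots hx ha
  change u x / v x = u a / v a at hconst
  rwa [hua, div_self (hv₀ a ha), div_eq_one_iff_eq (hv₀ x hx)] at hconst

theorem roots_agree_on_component_of_zero_general (n : ℕ) (hn : 2 ≤ n)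
    (f g₁ g₂ : ℝ → ℂ) (hg₁ : MemPD g₁) (hg₂ : MemPD g₂)
    (h₁ : ∀ x, g₁ x ^ n = f x) (h₂ : ∀ x, g₂ x ^ n = f x) :
    ∀ x ∈ connectedComponentIn (essSupp f) 0, g₁ x = g₂ x := by
  intro x hx
  have hn₀ : n ≠ 0 := by omega
  have h₀ : (0 : ℝ) ∈ essSupp f := connectedComponentIn_nonempty_iff.mp ⟨x, hx⟩
  have hg₂_ne : ∀ y ∈ connectedComponentIn (essSupp f) 0, g₂ y ≠ 0 := fun y hy hzero ↦
    connectedComponentIn_subset _ _ hy (by rw [← h₂ y, hzero, zero_pow hn₀])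
  have hg_zero : g₁ 0 = g₂ 0 :=
    RCLike.eq_of_pow_eq_of_nonneg hg₁.2.2.zero_nonneg hg₂.2.2.zero_nonneg hn₀ (by rw [h₁, h₂])
  exact isPreconnected_connectedComponentIn.eqOn_of_pow_eq_s9 hg₁.1.continuousOn
    hg₂.1.continuousOn hg₂_ne hn₀ (fun y _ ↦ by rw [h₁, h₂]) (mem_connectedComponentIn h₀)
    hg_zero hx

theorem roots_agree_on_component_of_zero (n : ℕ) (hn : 2 ≤ n)
    (f g₁ g₂ : ℝ → ℂ) (hf : MemPD f) (hg₁ : MemPD g₁) (hg₂ : MemPD g₂)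
    (h₁ : ∀ x, g₁ x ^ n = f x) (h₂ : ∀ x, g₂ x ^ n = f x) :
    ∀ x ∈ connectedComponentIn (essSupp f) 0, g₁ x = g₂ x :=
  roots_agree_on_component_of_zero_general n hn f g₁ g₂ hg₁ hg₂ h₁ h₂
end
end

section
/- Let φ : ℝ → ℂ be a continuous, integrable, positive definite function, let τ_1, …, τ_m ∈ ℝ, let c_1, …, c_m ∈ ℂ, and let c₀ be a real number with c₀ ≥ 2·(|c_1| + ⋯ + |c_m|). Then the function u(x) = c₀·φ(x) + Σ_{j=1}^m ( c_j·φ(x − τ_j) + conj(c_j)·φ(x + τ_j) ) is positive definite on ℝ. -/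
/-!
Writing
`u = (c₀ - 2 ∑ ‖c j‖) • φ + ∑ j (2 ‖c j‖ φ + c j φ(· - τ j) + conj (c j) φ(· + τ j))`
exhibits `u` as a nonnegative combination of positive definite functions. Each summand is
`x ↦ ∑ a b, d a * conj (d b) * φ (x - t a + t b)` for `d = (√‖c‖ e^{i arg c}, √‖c‖)` and
`t = (τ, 0)`, whose quadratic form at points `x j` with weights `e j` is that of `φ` at the
points `x j - t a` with weights `e j * d a`.
-/

open Complex MeasureTheory Set Pointwise ComplexOrder

noncomputable section

open ComplexConjugate

namespace IsPosDefFn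

variable {f g : ℝ → ℂ}

theorem sum_nonneg_of_fintype (hf : IsPosDefFn f) {ι : Type*} [Fintype ι] (x : ι → ℝ)
    (c : ι → ℂ) : 0 ≤ ∑ j, ∑ k, f (x j - x k) * c j * conj (c k) := by
  let e := Fintype.equivFin ι
  refine (hf _ (x ∘ e.symm) (c ∘ e.symm)).trans_eq ?_
  exact Fintype.sum_equiv e.symm _ _ fun j => Fintype.sum_equiv e.symm _ _ fun k => rfl

theorem add (hf : IsPosDefFn f) (hg : IsPosDefFn g) : IsPosDefFn fun x => f x + g x := by
  intro m x c
  simp only [add_mul, Finset.sum_add_distrib]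
  exact add_nonneg (hf m x c) (hg m x c)

theorem const_mul (hf : IsPosDefFn f) {r : ℝ} (hr : 0 ≤ r) :
    IsPosDefFn fun x => (r : ℂ) * f x := by
  intro m x c
  simp only [mul_assoc, ← Finset.mul_sum]
  simpa only [mul_assoc] using mul_nonneg (Complex.zero_le_real.mpr hr) (hf m x c)

theorem finset_sum {ι : Type*} (s : Finset ι) {F : ι → ℝ → ℂ}
    (h : ∀ i ∈ s, IsPosDefFn (F i)) : IsPosDefFn fun x => ∑ i ∈ s, F i x := by
  intro m x c
  refine (Finset.sum_nonneg fun i hi => h i hi m x c).trans_eq ?_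
  simp only [Finset.sum_mul]
  rw [Finset.sum_comm]
  exact Finset.sum_congr rfl fun j _ => Finset.sum_comm

theorem sum_translate (hf : IsPosDefFn f) {ι : Type*} [Fintype ι] (t : ι → ℝ) (d : ι → ℂ) :
    IsPosDefFn fun x => ∑ a, ∑ b, d a * conj (d b) * f (x - t a + t b) := by
  intro m x c
  refine (hf.sum_nonneg_of_fintype (fun p : Fin m × ι => x p.1 - t p.2)
    fun p => c p.1 * d p.2).trans_eq ?_
  simp only [Fintype.sum_prod_type, Finset.sum_mul, map_mul]
  refine Finset.sum_congr rfl fun j _ => ?_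
  rw [Finset.sum_comm]
  refine Finset.sum_congr rfl fun k _ => Finset.sum_congr rfl fun a _ =>
    Finset.sum_congr rfl fun b _ => ?_
  rw [show x j - t a - (x k - t b) = x j - x k - t a + t b by ring]
  ring

theorem translate_pair (hf : IsPosDefFn f) (c : ℂ) (τ : ℝ) :
    IsPosDefFn fun x => 2 * (‖c‖ : ℂ) * f x + (c * f (x - τ) + conj c * f (x + τ)) := by
  set s := Real.sqrt ‖c‖
  set u := Complex.exp (c.arg * I)
  have hs : (s : ℂ) * s = ‖c‖ := by exact_mod_cast Real.mul_self_sqrt (norm_nonneg c)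
  have hu : u * conj u = 1 := by
    rw [Complex.mul_conj, Complex.normSq_eq_norm_sq, Complex.norm_exp_ofReal_mul_I]; simp
  have hc : (‖c‖ : ℂ) * u = c := Complex.norm_mul_exp_arg_mul_I c
  have hc' : (‖c‖ : ℂ) * conj u = conj c := by simpa using congrArg conj hc
  convert hf.sum_translate ![τ, 0] ![s * u, s] using 2 with x
  simp only [Fin.sum_univ_two, Matrix.cons_val_zero, Matrix.cons_val_one, map_mul,
    Complex.conj_ofReal, sub_zero, add_zero, sub_add_cancel]
  linear_combination (-(u * conj u * f x + u * f (x - τ) + conj u * f (x + τ) + f x)) * hs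
    - ‖c‖ * f x * hu - f (x - τ) * hc - f (x + τ) * hc'

end IsPosDefFn

theorem posDef_of_translates_general (φ : ℝ → ℂ) (hpd : IsPosDefFn φ)
    (m : ℕ) (τ : Fin m → ℝ) (c : Fin m → ℂ) (c₀ : ℝ)
    (hc₀ : 2 * ∑ j, ‖c j‖ ≤ c₀) :
    IsPosDefFn (fun x => (c₀ : ℂ) * φ x +
      ∑ j, (c j * φ (x - τ j) + (starRingEnd ℂ) (c j) * φ (x + τ j))) := by
  have hsplit : (fun x => (c₀ : ℂ) * φ x +
      ∑ j, (c j * φ (x - τ j) + conj (c j) * φ (x + τ j))) =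
      fun x => ((c₀ - 2 * ∑ j, ‖c j‖ : ℝ) : ℂ) * φ x +
        ∑ j, (2 * (‖c j‖ : ℂ) * φ x + (c j * φ (x - τ j) + conj (c j) * φ (x + τ j))) := by
    funext x
    push_cast
    simp only [Finset.sum_add_distrib, ← Finset.sum_mul, ← Finset.mul_sum]
    ring
  rw [hsplit]
  exact (hpd.const_mul (sub_nonneg.mpr hc₀)).add
    (IsPosDefFn.finset_sum _ fun j _ => hpd.translate_pair (c j) (τ j))

theorem posDef_of_translates (φ : ℝ → ℂ) (hcont : Continuous φ)
    (hint : Integrable φ) (hpd : IsPosDefFn φ)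
    (m : ℕ) (τ : Fin m → ℝ) (c : Fin m → ℂ) (c₀ : ℝ)
    (hc₀ : 2 * ∑ j, ‖c j‖ ≤ c₀) :
    IsPosDefFn (fun x => (c₀ : ℂ) * φ x +
      ∑ j, (c j * φ (x - τ j) + (starRingEnd ℂ) (c j) * φ (x + τ j))) :=
  posDef_of_translates_general φ hpd m τ c c₀ hc₀
end
end

section
/- Let Λ₁(x) = max{1 − |x|, 0}, v₁(x) = Λ₁(x − π − 1) + Λ₁(x − 2π + 1), and v₂(x) = Λ₁(x − 11) + Λ₁(x − 12) + Λ₁(x − 13) + Λ₁(x − 14). Then the function v(x) = Λ₁(x) + (1/8)·(v₁(x) + v₁(−x)) + (1/16)·(v₂(x) + v₂(−x)) is a continuous positive definite function on ℝ. -/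
/-!
`Λ₁(x - y)` is the length of `[x, x + 1] ∩ [y, y + 1]`, i.e. the `L²` inner product of the
indicators of these intervals, so `Λ₁` is a Gram function and hence positive definite.
Replacing the indicator `u x` of `[x, x + 1]` by `u x + u (x + a)` shows that
`2 Λ₁(x) + Λ₁(x - a) + Λ₁(x + a)` is positive definite as well, and since `Λ₁` is even, `v` is
a nonnegative combination of six such functions.
-/

open Complex MeasureTheory Set Pointwise ComplexOrder

noncomputable section

/-- The truncated power function `Λ_α(x) = (max (1 - |x|) 0) ^ α`
(for natural `α`; note `Λ₁ = Lam 1` and `Λ₁ ^ n = Λ_n`). -/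
def Lam (α : ℕ) (x : ℝ) : ℝ := (max (1 - |x|) 0) ^ α
open scoped InnerProductSpace

section Gram

variable {H : Type*} [NormedAddCommGroup H] [InnerProductSpace ℂ H]

theorem isPosDefFn_of_inner {f : ℝ → ℂ} (u : ℝ → H) (hf : ∀ x y, f (x - y) = ⟪u y, u x⟫_ℂ) :
    IsPosDefFn f := by
  intro m x c
  have hgram : ∑ j, ∑ k, f (x j - x k) * c j * (starRingEnd ℂ) (c k)
      = ⟪∑ k, c k • u (x k), ∑ j, c j • u (x j)⟫_ℂ := by
    simp only [sum_inner, inner_sum, inner_smul_left, inner_smul_right, hf, Finset.mul_sum]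
    exact Finset.sum_congr rfl fun j _ => Finset.sum_congr rfl fun k _ => by ring
  rw [hgram, inner_self_eq_norm_sq_to_K]
  positivity

theorem IsPosDefFn.add_s12 {f g : ℝ → ℂ} (hf : IsPosDefFn f) (hg : IsPosDefFn g) :
    IsPosDefFn (fun x => f x + g x) := by
  intro m x c
  simpa only [add_mul, Finset.sum_add_distrib] using add_nonneg (hf m x c) (hg m x c)

theorem IsPosDefFn.const_mul_s12 {f : ℝ → ℂ} (hf : IsPosDefFn f) {r : ℝ} (hr : 0 ≤ r) :
    IsPosDefFn (fun x => r * f x) := by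
  intro m x c
  simpa only [mul_assoc, ← Finset.mul_sum] using
    mul_nonneg (Complex.zero_le_real.2 hr) (hf m x c)

theorem isPosDefFn_add_shifts_of_inner {f : ℝ → ℂ} (u : ℝ → H)
    (hf : ∀ x y, f (x - y) = ⟪u y, u x⟫_ℂ) (a : ℝ) :
    IsPosDefFn (fun x => 2 * f x + f (x - a) + f (x + a)) :=
  isPosDefFn_of_inner (fun x => u x + u (x + a)) fun x y => by
    simp only [inner_add_left, inner_add_right, ← hf]
    ring_nf

end Gram

theorem lam_neg (α : ℕ) (x : ℝ) : Lam α (-x) = Lam α x := by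
  rw [Lam, Lam, abs_neg]

@[fun_prop]
theorem continuous_lam (α : ℕ) : Continuous (Lam α) := by
  unfold Lam
  fun_prop

theorem lam_one_sub_eq_volume_inter (x y : ℝ) :
    Lam 1 (x - y) = volume.real (Icc x (x + 1) ∩ Icc y (y + 1)) := by
  rw [Icc_inter_Icc, Real.volume_real_Icc, Lam, pow_one]
  congr 1
  rcases le_total x y with h | h
  · rw [abs_of_nonpos (by linarith), max_eq_right h, min_eq_left (by linarith)]; ring
  · rw [abs_of_nonneg (by linarith), max_eq_left h, min_eq_right (by linarith)]; ring

def indicatorIccLp (x : ℝ) : Lp ℂ 2 (volume : Measure ℝ) :=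
  indicatorConstLp 2 measurableSet_Icc (measure_Icc_lt_top (a := x) (b := x + 1)).ne 1

theorem lam_one_sub_eq_inner (x y : ℝ) :
    (Lam 1 (x - y) : ℂ) = ⟪indicatorIccLp y, indicatorIccLp x⟫_ℂ := by
  rw [indicatorIccLp, indicatorIccLp,
    L2.inner_indicatorConstLp_one_indicatorConstLp_one _ _ measure_Icc_lt_top.ne
      measure_Icc_lt_top.ne, inter_comm, lam_one_sub_eq_volume_inter]
  rfl

def lamShifts (a x : ℝ) : ℂ := 2 * Lam 1 x + Lam 1 (x - a) + Lam 1 (-x - a)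

theorem isPosDefFn_lamShifts (a : ℝ) : IsPosDefFn (lamShifts a) := by
  convert isPosDefFn_add_shifts_of_inner (f := fun x => (Lam 1 x : ℂ)) _ lam_one_sub_eq_inner a
    using 2 with x
  rw [lamShifts, ← neg_add', lam_neg]

theorem v_continuous_posDef :
    let v₁ : ℝ → ℝ := fun x =>
      Lam 1 (x - Real.pi - 1) + Lam 1 (x - 2 * Real.pi + 1)
    let v₂ : ℝ → ℝ := fun x =>
      Lam 1 (x - 11) + Lam 1 (x - 12) + Lam 1 (x - 13) + Lam 1 (x - 14)
    let v : ℝ → ℝ := fun x =>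
      Lam 1 x + (1 / 8) * (v₁ x + v₁ (-x)) + (1 / 16) * (v₂ x + v₂ (-x))
    Continuous v ∧ IsPosDefFn (fun x => ((v x : ℝ) : ℂ)) := by
  intro v₁ v₂ v
  refine ⟨by fun_prop, ?_⟩
  have hv : (fun x => (v x : ℂ)) = fun x =>
      ((1 / 8 : ℝ) : ℂ) * (lamShifts (Real.pi + 1) x + lamShifts (2 * Real.pi - 1) x) +
        ((1 / 16 : ℝ) : ℂ) *
          (lamShifts 11 x + lamShifts 12 x + lamShifts 13 x + lamShifts 14 x) := by
    funext x
    simp only [v, v₁, v₂, lamShifts, sub_sub, sub_add]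
    push_cast
    ring
  rw [hv]
  have hg := isPosDefFn_lamShifts
  exact (((hg _).add_s12 (hg _)).const_mul_s12 (by norm_num)).add_s12
    (((((hg _).add_s12 (hg _)).add_s12 (hg _)).add_s12 (hg _)).const_mul_s12 (by norm_num))
end
end
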